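/- arXiv:1702.08493 — 2 statements merged into one kernel-verified Lean document; each statement's English description precedes it below -/
import Mathlib

section
/- Let G : ℝ → Matrix n n ℂ and let {ψₖ(t)}, {φₖ(t)} (k = 1,…,N) be differentiable solutions of i ψₖ' = G ψₖ and i φₖ' = G† φₖ such that at t = 0 they satisfy the completeness relation Σₖ ψₖ(0) ⬝ φₖ(0)† = I (sum of rank-one matrices |ψₖ⟩⟨φₖ|). Then Σₖ ψₖ(t) ⬝ φₖ(t)† = I for all t. -/
/-!
Write `Ψ t` and `Φ t` for the `n × N` matrices with columns `ψₖ t` and `φₖ t`, so that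
`∑ₖ |ψₖ⟩⟨φₖ| = Ψ Φᴴ`. The overlaps `⟨φₖ, ψₗ⟩` of a solution of `i u' = G u` with a solution of
`i v' = Gᴴ v` are constant, so the Gram matrix `Φᴴ Ψ` is constant. Since `Ψ` and `Φ` are square,
`Ψ Φᴴ = 1 ↔ Φᴴ Ψ = 1`, and the completeness relation at `0` propagates to every `t`.
-/

open Matrix

section

variable {n : Type*}

theorem sum_vecMulVec_star_eq_mul_conjTranspose {α ι : Type*} [Fintype ι] [Semiring α] [Star α]
    (ψ φ : ι → n → α) :
    ∑ k, vecMulVec (ψ k) (star (φ k)) = of (fun i k => ψ k i) * (of fun i k => φ k i)ᴴ := by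
  ext i j
  simp [Matrix.sum_apply, mul_apply, vecMulVec_apply]

theorem hasDerivAt_star_dotProduct [Fintype n] {u v : ℝ → n → ℂ} {u' v' : n → ℂ} {t : ℝ}
    (hu : ∀ i, HasDerivAt (fun s => u s i) (u' i) t)
    (hv : ∀ i, HasDerivAt (fun s => v s i) (v' i) t) :
    HasDerivAt (fun s => star (v s) ⬝ᵥ u s) (star v' ⬝ᵥ u t + star (v t) ⬝ᵥ u') t := by
  have := HasDerivAt.fun_sum fun i (_ : i ∈ Finset.univ) => ((hv i).star).fun_mul (hu i)
  simpa only [dotProduct, Pi.star_apply, ← Finset.sum_add_distrib] using this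

theorem star_dotProduct_eq_of_hasDerivAt_adjoint [Fintype n] {A : ℝ → Matrix n n ℂ}
    {u v : ℝ → n → ℂ}
    (hu : ∀ t i, HasDerivAt (fun s => u s i) (((-Complex.I) • (A t) *ᵥ u t) i) t)
    (hv : ∀ t i, HasDerivAt (fun s => v s i) (((-Complex.I) • (A t)ᴴ *ᵥ v t) i) t) (t : ℝ) :
    star (v t) ⬝ᵥ u t = star (v 0) ⬝ᵥ u 0 := by
  have hderiv : ∀ s, HasDerivAt (fun s => star (v s) ⬝ᵥ u s) 0 s := by
    intro s
    convert hasDerivAt_star_dotProduct (hu s) (hv s) using 1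
    rw [star_smul, star_mulVec, conjTranspose_conjTranspose, smul_dotProduct, dotProduct_smul,
      ← dotProduct_mulVec]
    simp
  exact is_const_of_deriv_eq_zero (fun s => (hderiv s).differentiableAt)
    (fun s => (hderiv s).deriv) t 0

end

theorem completeness_preserved_general {n : Type*} [Fintype n] [DecidableEq n]
    (N : ℕ) (hcard : Fintype.card n = N)
    (G : ℝ → Matrix n n ℂ)
    (ψ φ : Fin N → ℝ → n → ℂ)
    (hψ : ∀ k t i, HasDerivAt (fun s => ψ k s i)
      (((-Complex.I) • (G t).mulVec (ψ k t)) i) t)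
    (hφ : ∀ k t i, HasDerivAt (fun s => φ k s i)
      (((-Complex.I) • ((G t)ᴴ).mulVec (φ k t)) i) t)
    (hcomp : ∑ k, Matrix.vecMulVec (ψ k 0) (star (φ k 0)) = (1 : Matrix n n ℂ)) :
    ∀ t, ∑ k, Matrix.vecMulVec (ψ k t) (star (φ k t)) = (1 : Matrix n n ℂ) := by
  intro t
  have hsquare : Fintype.card n = Fintype.card (Fin N) := hcard.trans (Fintype.card_fin N).symm
  have hgram : ∀ s, (of fun i k => φ k s i)ᴴ * of (fun i k => ψ k s i)
      = (of fun i k => φ k 0 i)ᴴ * of (fun i k => ψ k 0 i) := by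
    intro s
    ext k l
    simpa [mul_apply, dotProduct] using
      star_dotProduct_eq_of_hasDerivAt_adjoint (hψ l) (hφ k) s
  rw [sum_vecMulVec_star_eq_mul_conjTranspose,
    mul_eq_one_comm_of_card_eq (R := ℂ) (eq := hsquare)] at hcomp ⊢
  rwa [hgram]

theorem completeness_preserved {n : Type*} [Fintype n] [DecidableEq n]
    (N : ℕ) (hcard : Fintype.card n = N)
    (G : ℝ → Matrix n n ℂ) (hG : Continuous G)
    (ψ φ : Fin N → ℝ → n → ℂ)
    (hψ : ∀ k t i, HasDerivAt (fun s => ψ k s i)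
      (((-Complex.I) • (G t).mulVec (ψ k t)) i) t)
    (hφ : ∀ k t i, HasDerivAt (fun s => φ k s i)
      (((-Complex.I) • ((G t)ᴴ).mulVec (φ k t)) i) t)
    (hcomp : ∑ k, Matrix.vecMulVec (ψ k 0) (star (φ k 0)) = (1 : Matrix n n ℂ)) :
    ∀ t, ∑ k, Matrix.vecMulVec (ψ k t) (star (φ k t)) = (1 : Matrix n n ℂ) :=
  completeness_preserved_general N hcard G ψ φ hψ hφ hcomp
end

section
/- Let G : ℝ → Matrix n n ℂ be continuous, ψ a solution of i ψ' = G ψ, φ a solution of i φ' = G† φ, and Q : ℝ → Matrix n n ℂ a differentiable matrix function satisfying i Q'(t) = Q(t) Σ(t) − Σ(t) Q(t), where Σ(t) = H(t) − G(t) and H is any differentiable matrix function with i H'(t) = G(t) H(t) − H(t) G(t). Then the expectation value ⟨φ(t), H(t) ψ(t)⟩ is constant in time. -/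
/-! With the generator `A = -i G` the three equations read `ψ' = A ψ`, `φ' = -A† φ` and
`H' = A H - H A`, so the product rule gives
`d/dt ⟨φ, H ψ⟩ = -⟨φ, A H ψ⟩ + ⟨φ, (A H - H A) ψ⟩ + ⟨φ, H A ψ⟩ = 0`. -/

open Matrix

section Derivatives

variable {𝕜 𝔸 : Type*} [NontriviallyNormedField 𝕜] [NormedCommRing 𝔸] [NormedAlgebra 𝕜 𝔸]
  {n : Type*} [Fintype n] {t : 𝕜}

theorem hasDerivAt_dotProduct {u v : 𝕜 → n → 𝔸} {u' v' : n → 𝔸}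
    (hu : ∀ i, HasDerivAt (fun s => u s i) (u' i) t)
    (hv : ∀ i, HasDerivAt (fun s => v s i) (v' i) t) :
    HasDerivAt (fun s => u s ⬝ᵥ v s) (u' ⬝ᵥ v t + u t ⬝ᵥ v') t := by
  have := HasDerivAt.fun_sum (u := Finset.univ) fun i _ => (hu i).fun_mul (hv i)
  simpa only [dotProduct, Finset.sum_add_distrib] using this

theorem hasDerivAt_mulVec_apply {m : Type*} {M : 𝕜 → Matrix m n 𝔸} {v : 𝕜 → n → 𝔸}
    {M' : Matrix m n 𝔸} {v' : n → 𝔸}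
    (hM : ∀ i j, HasDerivAt (fun s => M s i j) (M' i j) t)
    (hv : ∀ j, HasDerivAt (fun s => v s j) (v' j) t) (i : m) :
    HasDerivAt (fun s => (M s *ᵥ v s) i) ((M' *ᵥ v t + M t *ᵥ v') i) t :=
  hasDerivAt_dotProduct (hM i) hv

end Derivatives

theorem hasDerivAt_star_dotProduct_mulVec {𝕜 n : Type*} [RCLike 𝕜] [Fintype n]
    {φ ψ : ℝ → n → 𝕜} {H : ℝ → Matrix n n 𝕜} {φ' ψ' : n → 𝕜} {H' : Matrix n n 𝕜} {t : ℝ}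
    (hφ : ∀ i, HasDerivAt (fun s => φ s i) (φ' i) t)
    (hH : ∀ i j, HasDerivAt (fun s => H s i j) (H' i j) t)
    (hψ : ∀ i, HasDerivAt (fun s => ψ s i) (ψ' i) t) :
    HasDerivAt (fun s => star (φ s) ⬝ᵥ H s *ᵥ ψ s)
      (star φ' ⬝ᵥ H t *ᵥ ψ t + star (φ t) ⬝ᵥ (H' *ᵥ ψ t + H t *ᵥ ψ')) t :=
  hasDerivAt_dotProduct (fun i => (hφ i).star) (hasDerivAt_mulVec_apply hH hψ)

theorem star_dotProduct_mulVec_heisenberg_eq_zero {R n : Type*} [CommRing R] [StarRing R]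
    [Fintype n] (A H : Matrix n n R) (φ ψ : n → R) :
    star (-(Aᴴ *ᵥ φ)) ⬝ᵥ H *ᵥ ψ + star φ ⬝ᵥ ((A * H - H * A) *ᵥ ψ + H *ᵥ (A *ᵥ ψ)) = 0 := by
  simp only [star_neg, star_mulVec, conjTranspose_conjTranspose, neg_vecMul, neg_dotProduct,
    sub_mulVec, dotProduct_add, dotProduct_sub, ← mulVec_mulVec, dotProduct_mulVec, vecMul_vecMul]
  abel

theorem star_dotProduct_mulVec_eq_of_hasDerivAt {𝕜 n : Type*} [RCLike 𝕜] [Fintype n]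
    {A H : ℝ → Matrix n n 𝕜} {φ ψ : ℝ → n → 𝕜}
    (hφ : ∀ t i, HasDerivAt (fun s => φ s i) ((-((A t)ᴴ *ᵥ φ t)) i) t)
    (hH : ∀ t i j, HasDerivAt (fun s => H s i j) ((A t * H t - H t * A t) i j) t)
    (hψ : ∀ t i, HasDerivAt (fun s => ψ s i) ((A t *ᵥ ψ t) i) t) (t : ℝ) :
    star (φ t) ⬝ᵥ H t *ᵥ ψ t = star (φ 0) ⬝ᵥ H 0 *ᵥ ψ 0 := by
  have hderiv : ∀ s, HasDerivAt (fun s => star (φ s) ⬝ᵥ H s *ᵥ ψ s) 0 s := fun s => by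
    simpa only [star_dotProduct_mulVec_heisenberg_eq_zero] using
      hasDerivAt_star_dotProduct_mulVec (hφ s) (hH s) (hψ s)
  exact is_const_of_deriv_eq_zero (fun s => (hderiv s).differentiableAt)
    (fun s => (hderiv s).deriv) t 0

theorem energy_expectation_constant_general {n : Type*} [Fintype n]
    (G : ℝ → Matrix n n ℂ)
    (ψ φ : ℝ → n → ℂ)
    (hψ : ∀ t i, HasDerivAt (fun s => ψ s i)
      (((-Complex.I) • (G t).mulVec (ψ t)) i) t)
    (hφ : ∀ t i, HasDerivAt (fun s => φ s i)
      (((-Complex.I) • ((G t)ᴴ).mulVec (φ t)) i) t)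
    (H : ℝ → Matrix n n ℂ)
    (hH : ∀ t i j, HasDerivAt (fun s => H s i j)
      (((-Complex.I) • (G t * H t - H t * G t)) i j) t) :
    ∀ t, star (φ t) ⬝ᵥ (H t).mulVec (ψ t) = star (φ 0) ⬝ᵥ (H 0).mulVec (ψ 0) := by
  have hA : ∀ t, -((-Complex.I • G t)ᴴ *ᵥ φ t) = -Complex.I • (G t)ᴴ *ᵥ φ t := fun t => by
    simp [conjTranspose_smul, smul_mulVec]
  have hComm : ∀ t, (-Complex.I • G t) * H t - H t * (-Complex.I • G t)
      = -Complex.I • (G t * H t - H t * G t) := fun t => by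
    rw [smul_mul_assoc, mul_smul_comm, smul_sub (-Complex.I)]
  have hGψ : ∀ t, (-Complex.I • G t) *ᵥ ψ t = -Complex.I • G t *ᵥ ψ t := fun t =>
    smul_mulVec _ _ _
  exact star_dotProduct_mulVec_eq_of_hasDerivAt (A := fun t => -Complex.I • G t)
    (fun t => hA t ▸ hφ t) (fun t => hComm t ▸ hH t) (fun t => hGψ t ▸ hψ t)

theorem energy_expectation_constant {n : Type*} [Fintype n] [DecidableEq n]
    (G : ℝ → Matrix n n ℂ) (hG : Continuous G)
    (ψ φ : ℝ → n → ℂ)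
    (hψ : ∀ t i, HasDerivAt (fun s => ψ s i)
      (((-Complex.I) • (G t).mulVec (ψ t)) i) t)
    (hφ : ∀ t i, HasDerivAt (fun s => φ s i)
      (((-Complex.I) • ((G t)ᴴ).mulVec (φ t)) i) t)
    (H : ℝ → Matrix n n ℂ)
    (hH : ∀ t i j, HasDerivAt (fun s => H s i j)
      (((-Complex.I) • (G t * H t - H t * G t)) i j) t)
    (Sig : ℝ → Matrix n n ℂ) (hSig : ∀ t, Sig t = H t - G t)
    (Q : ℝ → Matrix n n ℂ)
    (hQ : ∀ t i j, HasDerivAt (fun s => Q s i j)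
      (((-Complex.I) • (Q t * Sig t - Sig t * Q t)) i j) t) :
    ∀ t, star (φ t) ⬝ᵥ (H t).mulVec (ψ t) = star (φ 0) ⬝ᵥ (H 0).mulVec (ψ 0) :=
  energy_expectation_constant_general G ψ φ hψ hφ H hH
end
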